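/- arXiv:2306.16715 — 2 statements merged into one kernel-verified Lean document; each statement's English description precedes it below -/
import Mathlib

section
/- Let δ_{sz}(x) > 0 for all (s,z) in a finite index set Σ and all x, with Σ_{(s,z)∈Σ} δ_{sz}(x) = 1. Let γ_s, θ_z > 0. Among all positive tilting functions η for which the weights ρ(s,z,x) = γ_s θ_z η(x) / (δ_{sz}(x) E_+[η(X)]) have finite second moment E_+[ρ(S,Z,X)²], the choice η*(x) = (Σ_{s,z} γ_s² θ_z² / δ_{sz}(x))⁻¹ maximizes the effective sample size N / E_+[ρ²(S,Z,X)]. -/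
open MeasureTheory

/-- The tilting function η*(x) = (∑ γ_s² θ_z² / δ_{sz}(x))⁻¹ maximizes the
effective sample size N / E₊[ρ²] among all positive tilting functions with finite
second-moment weights. -/
theorem flexor_tilting_maximizes_ESS
    {Ω : Type*} [MeasurableSpace Ω] (μ : Measure Ω) [IsProbabilityMeasure μ]
    {J K : ℕ} (δ : Fin J × Fin K → Ω → ℝ) (γ : Fin J → ℝ) (θ : Fin K → ℝ)
    (hδpos : ∀ sz x, 0 < δ sz x)
    (hδsum : ∀ x, ∑ sz : Fin J × Fin K, δ sz x = 1)
    (hγpos : ∀ s, 0 < γ s) (hθpos : ∀ z, 0 < θ z)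
    (N : ℝ) (hN : 0 < N)
    -- the balancing weight associated with a tilting function η'
    (ρ : (Ω → ℝ) → Fin J × Fin K → Ω → ℝ)
    (hρ : ∀ η' sz x, ρ η' sz x = γ sz.1 * θ sz.2 * η' x / (δ sz x * ∫ y, η' y ∂μ))
    -- the second moment E₊[ρ²(S,Z,X)] of the balancing weight
    (M : (Ω → ℝ) → ℝ)
    (hM : ∀ η', M η' = ∫ x, ∑ sz : Fin J × Fin K, (ρ η' sz x) ^ 2 * δ sz x ∂μ)
    -- the optimal tilting function
    (ηstar : Ω → ℝ)
    (hηstar : ∀ x, ηstar x = (∑ sz : Fin J × Fin K, (γ sz.1) ^ 2 * (θ sz.2) ^ 2 / δ sz x)⁻¹)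
    (hηstarInt : Integrable ηstar μ)
    -- an arbitrary competing positive tilting function with finite second moment
    (η : Ω → ℝ) (hηpos : ∀ x, 0 < η x) (hηmeas : Measurable η) (hηInt : Integrable η μ)
    (hfin : Integrable (fun x => ∑ sz : Fin J × Fin K, (ρ η sz x) ^ 2 * δ sz x) μ) :
    N / M η ≤ N / M ηstar := by
  -- Ω is nonempty
  have hΩ : Nonempty Ω := by
    by_contra h
    rw [not_nonempty_iff] at h
    have : μ Set.univ = 1 := measure_univ
    rw [Set.univ_eq_empty_iff.mpr h, measure_empty] at this
    exact zero_ne_one this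
  obtain ⟨x₀⟩ := hΩ
  -- the index set is nonempty
  have hne : Nonempty (Fin J × Fin K) := by
    by_contra h
    rw [not_nonempty_iff] at h
    have := hδsum x₀
    rw [Finset.univ_eq_empty, Finset.sum_empty] at this
    exact zero_ne_one this
  set A : Ω → ℝ := fun x => ∑ sz : Fin J × Fin K, (γ sz.1) ^ 2 * (θ sz.2) ^ 2 / δ sz x
    with hA
  have hApos : ∀ x, 0 < A x := by
    intro x
    exact Finset.sum_pos (fun sz _ => div_pos
      (mul_pos (pow_pos (hγpos sz.1) 2) (pow_pos (hθpos sz.2) 2))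
      (hδpos sz x)) Finset.univ_nonempty
  have hηstar' : ∀ x, ηstar x = (A x)⁻¹ := hηstar
  have hηstarpos : ∀ x, 0 < ηstar x := fun x => by
    rw [hηstar' x]; exact inv_pos.mpr (hApos x)
  -- positivity of the integrals
  have I1pos : 0 < ∫ x, η x ∂μ := by
    rw [integral_pos_iff_support_of_nonneg (fun x => (hηpos x).le) hηInt]
    have : Function.support η = Set.univ := by
      ext x; simp [Function.support, (hηpos x).ne']
    rw [this, measure_univ]; norm_num
  have I3pos : 0 < ∫ x, ηstar x ∂μ := by
    rw [integral_pos_iff_support_of_nonneg (fun x => (hηstarpos x).le) hηstarInt]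
    have : Function.support ηstar = Set.univ := by
      ext x; simp [Function.support, (hηstarpos x).ne']
    rw [this, measure_univ]; norm_num
  set I1 : ℝ := ∫ x, η x ∂μ with hI1
  set I3 : ℝ := ∫ x, ηstar x ∂μ with hI3
  -- pointwise identity for the second-moment integrand
  have key : ∀ (η' : Ω → ℝ), (∫ y, η' y ∂μ) ≠ 0 → ∀ x,
      ∑ sz : Fin J × Fin K, (ρ η' sz x) ^ 2 * δ sz x
        = (η' x) ^ 2 * A x / (∫ y, η' y ∂μ) ^ 2 := by
    intro η' hI x
    rw [hA]
    rw [Finset.mul_sum, Finset.sum_div]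
    apply Finset.sum_congr rfl
    intro sz _
    rw [hρ]
    have hδ := (hδpos sz x).ne'
    field_simp
  -- M η in closed form
  have hMη : M η = (∫ x, (η x) ^ 2 * A x ∂μ) / I1 ^ 2 := by
    rw [hM]
    rw [integral_congr_ae (Filter.Eventually.of_forall (key η I1pos.ne'))]
    rw [integral_div]
  -- integrability of η² A
  have h2 : Integrable (fun x => (η x) ^ 2 * A x) μ := by
    have h := hfin.const_mul (I1 ^ 2)
    apply h.congr
    filter_upwards with x
    rw [key η I1pos.ne' x, ← hI1]
    field_simp
  -- M ηstar in closed form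
  have hMstar : M ηstar = I3⁻¹ := by
    rw [hM]
    rw [integral_congr_ae (Filter.Eventually.of_forall (key ηstar I3pos.ne'))]
    have : ∀ x, (ηstar x) ^ 2 * A x / I3 ^ 2 = ηstar x / I3 ^ 2 := by
      intro x
      rw [hηstar' x]
      congr 1
      rw [pow_two, mul_assoc, inv_mul_cancel₀ (hApos x).ne', mul_one]
    rw [integral_congr_ae (Filter.Eventually.of_forall this), integral_div, ← hI3]
    field_simp
  -- the Cauchy–Schwarz step
  set t : ℝ := I1 / I3 with ht
  have hg : ∀ x, 0 ≤ (η x) ^ 2 * A x - 2 * t * η x + t ^ 2 * ηstar x := by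
    intro x
    have hAx := hApos x
    have : (η x) ^ 2 * A x - 2 * t * η x + t ^ 2 * ηstar x
        = (η x * A x - t) ^ 2 / A x := by
      rw [hηstar' x]
      field_simp
      ring
    rw [this]
    positivity
  have hint : Integrable
      (fun x => (η x) ^ 2 * A x - 2 * t * η x + t ^ 2 * ηstar x) μ :=
    (h2.sub (hηInt.const_mul (2 * t))).add (hηstarInt.const_mul (t ^ 2))
  have hI : 0 ≤ ∫ x, ((η x) ^ 2 * A x - 2 * t * η x + t ^ 2 * ηstar x) ∂μ :=
    integral_nonneg hg
  have ha : Integrable (fun x => (η x) ^ 2 * A x - 2 * t * η x) μ :=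
    h2.sub (hηInt.const_mul (2 * t))
  have hb : Integrable (fun x => 2 * t * η x) μ := hηInt.const_mul (2 * t)
  have hc : Integrable (fun x => t ^ 2 * ηstar x) μ := hηstarInt.const_mul (t ^ 2)
  have hIval : ∫ x, ((η x) ^ 2 * A x - 2 * t * η x + t ^ 2 * ηstar x) ∂μ
      = (∫ x, (η x) ^ 2 * A x ∂μ) - 2 * t * I1 + t ^ 2 * I3 := by
    rw [integral_add ha hc, integral_sub h2 hb, integral_const_mul, integral_const_mul]
  rw [hIval] at hI
  have h2t : t * I3 = I1 := by rw [ht]; field_simp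
  have h3t : t ^ 2 * I3 = t * I1 := by rw [pow_two, mul_assoc, h2t]
  have hCS : I1 ^ 2 / I3 ≤ ∫ x, (η x) ^ 2 * A x ∂μ := by
    have heq : I1 ^ 2 / I3 = t * I1 := by
      rw [ht]; field_simp
    rw [heq]
    linarith [hI, h3t]
  -- conclude M ηstar ≤ M η
  have hMle : M ηstar ≤ M η := by
    rw [hMη, hMstar]
    rw [inv_eq_one_div, div_le_div_iff₀ I3pos (by positivity : (0:ℝ) < I1 ^ 2)]
    calc 1 * I1 ^ 2 = (I1 ^ 2 / I3) * I3 := by field_simp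
    _ ≤ (∫ x, (η x) ^ 2 * A x ∂μ) * I3 := by
        exact mul_le_mul_of_nonneg_right hCS I3pos.le
  have hMstarpos : 0 < M ηstar := by rw [hMstar]; exact inv_pos.mpr I3pos
  exact div_le_div_of_nonneg_left hN.le hMstarpos hMle
end

section
/- For the optimal tilting function η*(x) = (Σ_{s,z} γ_s² θ_z² / δ_{sz}(x))⁻¹, the effective sample size of the resulting pseudo-population equals N · E_+[η*(X)], where the expectation is over X ~ f_+. -/
/-!
Write `S x = ∑ γ_s² θ_z² / δ_{sz}(x)`, so that `η* = S⁻¹`, and `c = E₊[η*]`. Each summand of the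
second moment of the balancing weights factors as `ρ² δ = (γ² θ² / δ) · η*² / c²`, so the
pointwise second moment is `S · η*² / c² = η* / c²`. Integrating gives `E₊[ρ²] = c / c² = 1 / c`,
hence `N / E₊[ρ²] = N · c`.
-/

open MeasureTheory

theorem div_mul_sq_mul_self {𝕜 : Type*} [Field 𝕜] (a η d c : 𝕜) :
    (a * η / (d * c)) ^ 2 * d = a ^ 2 / d * (η ^ 2 / c ^ 2) := by
  rcases eq_or_ne d 0 with rfl | hd
  · simp
  · field_simp

theorem sum_div_mul_sq_mul_eq_inv_sum_div {ι 𝕜 : Type*} [Fintype ι] [Field 𝕜]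
    (a d : ι → 𝕜) (c : 𝕜) :
    ∑ i, (a i * (∑ j, a j ^ 2 / d j)⁻¹ / (d i * c)) ^ 2 * d i
      = (∑ j, a j ^ 2 / d j)⁻¹ / c ^ 2 := by
  set S := ∑ j, a j ^ 2 / d j
  calc ∑ i, (a i * S⁻¹ / (d i * c)) ^ 2 * d i
      = S * (S⁻¹ ^ 2 / c ^ 2) := by simp only [div_mul_sq_mul_self, ← Finset.sum_mul, S]
    _ = S⁻¹ / c ^ 2 := by grind

theorem integral_div_sq_integral {Ω : Type*} [MeasurableSpace Ω] (μ : Measure Ω) (f : Ω → ℝ) :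
    ∫ x, f x / (∫ y, f y ∂μ) ^ 2 ∂μ = (∫ y, f y ∂μ)⁻¹ := by
  rw [integral_div, sq, div_self_mul_self']

theorem flexor_ESS_eq_N_mul_expectation_general
    {Ω : Type*} [MeasurableSpace Ω] (μ : Measure Ω)
    {J K : ℕ} (δ : Fin J × Fin K → Ω → ℝ) (γ : Fin J → ℝ) (θ : Fin K → ℝ)
    (N : ℝ)
    (ηstar : Ω → ℝ)
    (hηstar : ∀ x, ηstar x = (∑ sz : Fin J × Fin K, (γ sz.1) ^ 2 * (θ sz.2) ^ 2 / δ sz x)⁻¹)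
    -- the balancing weights of the pseudo-population generated by η*
    (ρ : Fin J × Fin K → Ω → ℝ)
    (hρ : ∀ sz x, ρ sz x = γ sz.1 * θ sz.2 * ηstar x / (δ sz x * ∫ y, ηstar y ∂μ)) :
    N / ∫ x, ∑ sz : Fin J × Fin K, (ρ sz x) ^ 2 * δ sz x ∂μ
      = N * ∫ x, ηstar x ∂μ := by
  have second_moment : ∀ x, ∑ sz : Fin J × Fin K, (ρ sz x) ^ 2 * δ sz x
      = ηstar x / (∫ y, ηstar y ∂μ) ^ 2 := by
    intro x
    simp only [hρ, hηstar x, ← mul_pow]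
    exact sum_div_mul_sq_mul_eq_inv_sum_div (fun sz => γ sz.1 * θ sz.2) (δ · x) _
  simp only [second_moment, integral_div_sq_integral, div_inv_eq_mul]

/-- For the optimal tilting function η*, the effective sample size of the
resulting pseudo-population equals N · E₊[η*(X)]. -/
theorem flexor_ESS_eq_N_mul_expectation
    {Ω : Type*} [MeasurableSpace Ω] (μ : Measure Ω) [IsProbabilityMeasure μ]
    {J K : ℕ} (δ : Fin J × Fin K → Ω → ℝ) (γ : Fin J → ℝ) (θ : Fin K → ℝ)
    (hδpos : ∀ sz x, 0 < δ sz x)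
    (hδsum : ∀ x, ∑ sz : Fin J × Fin K, δ sz x = 1)
    (hγpos : ∀ s, 0 < γ s) (hθpos : ∀ z, 0 < θ z)
    (N : ℝ)
    (ηstar : Ω → ℝ)
    (hηstar : ∀ x, ηstar x = (∑ sz : Fin J × Fin K, (γ sz.1) ^ 2 * (θ sz.2) ^ 2 / δ sz x)⁻¹)
    (hηstarInt : Integrable ηstar μ)
    -- the balancing weights of the pseudo-population generated by η*
    (ρ : Fin J × Fin K → Ω → ℝ)
    (hρ : ∀ sz x, ρ sz x = γ sz.1 * θ sz.2 * ηstar x / (δ sz x * ∫ y, ηstar y ∂μ))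
    (hfin : Integrable (fun x => ∑ sz : Fin J × Fin K, (ρ sz x) ^ 2 * δ sz x) μ) :
    N / ∫ x, ∑ sz : Fin J × Fin K, (ρ sz x) ^ 2 * δ sz x ∂μ
      = N * ∫ x, ηstar x ∂μ :=
  flexor_ESS_eq_N_mul_expectation_general μ δ γ θ N ηstar hηstar ρ hρ
end
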